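/- arXiv:2211.01063 — 3 statements merged into one kernel-verified Lean document; each statement's English description precedes it below -/
import Mathlib

section
/- Let y = (y_1,…,y_n) be a list of n positive integers, m = y_1 + ⋯ + y_n, and let x = (x_1,…,x_n) with each x_i ∈ {1,…,m} be nondecreasing (x_1 ≤ x_2 ≤ ⋯ ≤ x_n). Then x is a parking assortment for y if and only if x_i ≤ 1 + Σ_{j=1}^{i−1} y_j for all i ∈ {1,…,n}. -/
open Classical in
/-- One car attempts to park on a one-way street with spots `1, …, m`: given the set
`occ` of occupied spots, the car with preference `p` and length `l` parks in spots
`j, j+1, …, j+l-1` for the least `j ≥ p` such that these spots all exist (are `≤ m`)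
and are unoccupied; returns the new set of occupied spots, or `none` if parking fails. -/
noncomputable def parkOne (m : ℕ) (occ : Finset ℕ) (p l : ℕ) : Option (Finset ℕ) :=
  if h : ∃ j, p ≤ j ∧ j + l ≤ m + 1 ∧ ∀ k ∈ Finset.Ico j (j + l), k ∉ occ then
    some (occ ∪ Finset.Ico (Nat.find h) (Nat.find h + l))
  else none

/-- Run the parking-assortment process for the cars `(preference, length)` in order. -/
noncomputable def parkList (m : ℕ) : List (ℕ × ℕ) → Finset ℕ → Option (Finset ℕ)
  | [], occ => some occ
  | c :: rest, occ => (parkOne m occ c.1 c.2).bind (parkList m rest)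

/-- `x` is a parking assortment for the list of car lengths `y`. -/
def IsPA (y x : List ℕ) : Prop :=
  x.length = y.length ∧ (∀ a ∈ x, 1 ≤ a ∧ a ≤ y.sum) ∧
    (parkList y.sum (x.zip y) ∅).isSome

/-- `PA y` is the set of parking assortments for `y`. -/
def PA (y : List ℕ) : Set (List ℕ) := {x | IsPA y x}

/-- `PAinv y` is the set of (permutation-)invariant parking assortments for `y`:
those preference lists all of whose rearrangements are parking assortments for `y`. -/
def PAinv (y : List ℕ) : Set (List ℕ) := {x | ∀ x', x'.Perm x → IsPA y x'}

/-- `y` is minimally invariant if the all-ones list is the only invariant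
parking assortment for `y`. -/
def MinInv (y : List ℕ) : Prop := PAinv y = {List.replicate y.length 1}

/-!
Parking one car in front of a block of occupied spots `1, …, s` keeps the occupied set an initial
segment, so when each `x_i ≤ 1 + y_1 + ⋯ + y_{i-1}` car `i` parks right after the cars before it
and everyone parks. Conversely, since `x` is nondecreasing, cars `i, …, n` all park in the spots
`x_i, …, m`; they need `y_i + ⋯ + y_n = m - (y_1 + ⋯ + y_{i-1})` distinct spots there, which
forces `x_i ≤ 1 + y_1 + ⋯ + y_{i-1}`.
-/

open Finset

section Parking

variable {m : ℕ}

lemma parkOne_eq_some {occ occ' : Finset ℕ} {p l : ℕ} (h : parkOne m occ p l = some occ') :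
    ∃ j, p ≤ j ∧ j + l ≤ m + 1 ∧ Disjoint occ (Ico j (j + l)) ∧ occ' = occ ∪ Ico j (j + l) := by
  unfold parkOne at h
  split at h
  · rename_i hex
    obtain ⟨hpj, hjm, hfree⟩ := Nat.find_spec hex
    exact ⟨_, hpj, hjm, disjoint_right.mpr hfree, (Option.some_inj.mp h).symm⟩
  · cases h

lemma card_of_parkOne_eq_some {occ occ' : Finset ℕ} {p l : ℕ}
    (h : parkOne m occ p l = some occ') : occ'.card = occ.card + l := by
  obtain ⟨j, -, -, hdisj, rfl⟩ := parkOne_eq_some h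
  rw [card_union_of_disjoint hdisj, Nat.card_Ico, Nat.add_sub_cancel_left]

lemma subset_of_parkOne_eq_some {occ occ' : Finset ℕ} {p l : ℕ}
    (h : parkOne m occ p l = some occ') : occ' ⊆ occ ∪ Ico p (m + 1) := by
  obtain ⟨j, hpj, hjm, -, rfl⟩ := parkOne_eq_some h
  exact union_subset_union_right (Ico_subset_Ico hpj hjm)

lemma parkOne_Ico {s p l : ℕ} (hp : 1 ≤ p) (hps : p ≤ s + 1) (hsl : s + l ≤ m) :
    parkOne m (Ico 1 (s + 1)) p l = some (Ico 1 (s + l + 1)) := by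
  have hfree : ∀ j, s + 1 ≤ j → ∀ k ∈ Ico j (j + l), k ∉ Ico 1 (s + 1) := by
    intro j hj k hk
    simp only [mem_Ico] at hk ⊢
    omega
  have hex : ∃ j, p ≤ j ∧ j + l ≤ m + 1 ∧ ∀ k ∈ Ico j (j + l), k ∉ Ico 1 (s + 1) :=
    ⟨s + 1, hps, by omega, hfree _ le_rfl⟩
  rw [parkOne, dif_pos hex, Option.some_inj]
  rcases Nat.eq_zero_or_pos l with rfl | hl
  · simp
  -- a car of positive length cannot start inside `1, …, s`, and `p ≥ 1` rules out spot `0`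
  have hfind : Nat.find hex = s + 1 := by
    refine (Nat.find_eq_iff hex).mpr ⟨⟨hps, by omega, hfree _ le_rfl⟩, fun j hj hjfree => ?_⟩
    have hpj := hjfree.1
    exact hjfree.2.2 j (by simp only [mem_Ico]; omega) (by simp only [mem_Ico]; omega)
  rw [hfind, Ico_union_Ico_eq_Ico (by omega) (by omega), Nat.add_right_comm]

lemma card_of_parkList_eq_some :
    ∀ {L : List (ℕ × ℕ)} {occ occ' : Finset ℕ}, parkList m L occ = some occ' →
      occ'.card = occ.card + (L.map Prod.snd).sum
  | [], _, _, h => by simp_all [parkList]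
  | c :: rest, occ, occ', h => by
    obtain ⟨occ₁, h₁, hrest⟩ := Option.bind_eq_some_iff.mp h
    rw [card_of_parkList_eq_some hrest, card_of_parkOne_eq_some h₁, List.map_cons, List.sum_cons,
      Nat.add_assoc]

lemma subset_of_parkList_eq_some {q : ℕ} :
    ∀ {L : List (ℕ × ℕ)} {occ occ' : Finset ℕ}, parkList m L occ = some occ' →
      (∀ c ∈ L, q ≤ c.1) → occ' ⊆ occ ∪ Ico q (m + 1)
  | [], _, _, h, _ => by simp_all [parkList]
  | c :: rest, occ, occ', h, hq => by
    obtain ⟨occ₁, h₁, hrest⟩ := Option.bind_eq_some_iff.mp h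
    have h₁q : occ₁ ⊆ occ ∪ Ico q (m + 1) :=
      (subset_of_parkOne_eq_some h₁).trans
        (union_subset_union_right (Ico_subset_Ico_left (hq c List.mem_cons_self)))
    calc occ' ⊆ occ₁ ∪ Ico q (m + 1) :=
          subset_of_parkList_eq_some hrest fun d hd => hq d (List.mem_cons_of_mem _ hd)
      _ ⊆ occ ∪ Ico q (m + 1) := union_subset h₁q subset_union_right

lemma parkList_sum_le {q : ℕ} {L : List (ℕ × ℕ)} {occ occ' : Finset ℕ}
    (h : parkList m L occ = some occ') (hq : ∀ c ∈ L, q ≤ c.1) :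
    (L.map Prod.snd).sum ≤ m + 1 - q := by
  have hcard := (card_le_card (subset_of_parkList_eq_some h hq)).trans (card_union_le _ _)
  rw [card_of_parkList_eq_some h, Nat.card_Ico] at hcard
  omega

lemma exists_parkList_drop_eq_some :
    ∀ {L : List (ℕ × ℕ)} {occ occ' : Finset ℕ} (i : ℕ), parkList m L occ = some occ' →
      ∃ occ₁, parkList m (L.drop i) occ₁ = some occ'
  | _, occ, _, 0, h => ⟨occ, h⟩
  | [], _, _, _ + 1, h => ⟨_, h⟩
  | _ :: _, _, _, i + 1, h => by
    obtain ⟨_, -, hrest⟩ := Option.bind_eq_some_iff.mp h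
    exact exists_parkList_drop_eq_some i hrest

lemma parkList_zip_Ico :
    ∀ {x y : List ℕ} {s : ℕ}, x.length = y.length → (∀ a ∈ x, 1 ≤ a) → s + y.sum ≤ m →
      (∀ i < x.length, x.getD i 0 ≤ s + 1 + (y.take i).sum) →
      parkList m (x.zip y) (Ico 1 (s + 1)) = some (Ico 1 (s + y.sum + 1))
  | [], [], _, _, _, _, _ => by simp [parkList]
  | a :: x, b :: y, s, hlen, hx, hsum, hbound => by
    have ha : a ≤ s + 1 := by simpa using hbound 0 (by simp)
    rw [List.sum_cons] at hsum
    have hrest := parkList_zip_Ico (s := s + b) (Nat.succ.inj hlen)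
      (fun a' ha' => hx a' (List.mem_cons_of_mem _ ha')) (by omega) fun i hi => by
        have hi' := hbound (i + 1) (by simpa using hi)
        simp only [List.getD_cons_succ, List.take_succ_cons, List.sum_cons] at hi'
        omega
    rw [List.zip_cons_cons, parkList, parkOne_Ico (hx a List.mem_cons_self) ha (by omega),
      Option.bind_some, hrest, List.sum_cons, Nat.add_assoc s b]

end Parking

lemma List.Pairwise.getElem_le_of_mem_drop {α : Type*} [Preorder α] {x : List α}
    (hsort : x.Pairwise (· ≤ ·)) {i : ℕ} (hi : i < x.length) {a : α} (ha : a ∈ x.drop i) :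
    x[i] ≤ a := by
  have hpw := hsort.drop (i := i)
  rw [List.drop_eq_getElem_cons hi] at ha hpw
  rcases List.mem_cons.mp ha with rfl | ha
  · exact le_rfl
  · exact List.rel_of_pairwise_cons hpw ha

theorem stmt0_general (y x : List ℕ)
    (hlen : x.length = y.length)
    (hx : ∀ a ∈ x, 1 ≤ a ∧ a ≤ y.sum)
    (hsort : x.Pairwise (· ≤ ·)) :
    x ∈ PA y ↔ ∀ i < x.length, x.getD i 0 ≤ 1 + (y.take i).sum := by
  constructor
  · rintro ⟨-, -, hpark⟩ i hi
    obtain ⟨occ', hocc'⟩ := Option.isSome_iff_exists.mp hpark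
    obtain ⟨occ₁, hdrop⟩ := exists_parkList_drop_eq_some i hocc'
    rw [List.zip_eq_zipWith, List.drop_zipWith, ← List.zip_eq_zipWith] at hdrop
    have hlater : ∀ c ∈ (x.drop i).zip (y.drop i), x[i] ≤ c.1 := fun c hc =>
      hsort.getElem_le_of_mem_drop hi (List.of_mem_zip hc).1
    have hsum := parkList_sum_le hdrop hlater
    rw [List.map_snd_zip (by simp [hlen])] at hsum
    have hsplit := List.sum_take_add_sum_drop y i
    have hxi := (hx x[i] (List.getElem_mem hi)).2
    rw [List.getD_eq_getElem?_getD, List.getElem?_eq_getElem hi, Option.getD_some]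
    omega
  · intro hbound
    refine ⟨hlen, hx, ?_⟩
    have hpark := parkList_zip_Ico (m := y.sum) (s := 0) hlen (fun a ha => (hx a ha).1)
      (by omega) (by simpa [Nat.add_comm] using hbound)
    rw [zero_add, Ico_self] at hpark
    simp [hpark]

theorem stmt0 (y x : List ℕ) (hy : ∀ a ∈ y, 0 < a)
    (hlen : x.length = y.length)
    (hx : ∀ a ∈ x, 1 ≤ a ∧ a ≤ y.sum)
    (hsort : x.Pairwise (· ≤ ·)) :
    x ∈ PA y ↔ ∀ i < x.length, x.getD i 0 ≤ 1 + (y.take i).sum :=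
  stmt0_general y x hlen hx hsort
end

section
/- Let y = (y_1,…,y_n) be a list of n positive integers and let x = (x_1,…,x_n) be an invariant parking assortment for y. If k is an index at which x attains its maximum value (k = argmax_{i∈[n]} x_i), then the list obtained from x by deleting its k-th entry is an invariant parking assortment for the restricted car lengths (y_1,…,y_{n−1}). -/
/-!
By invariance we may move the maximal preference `p` to the last car, of length `g`; it parks
in a block `[j, j + g)` with `p ≤ j`. Every other car prefers a spot `≤ p ≤ j` and parks
outside that block, so cutting the block out of the street and shifting the later spots down
by `g` (`squeeze`) turns the run of the other cars into a successful run on the street of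
length `y_1 + ⋯ + y_{n-1}`; all rearrangements are handled alike.
-/

def Fits (m : ℕ) (occ : Finset ℕ) (p l a : ℕ) : Prop :=
  p ≤ a ∧ a + l ≤ m + 1 ∧ ∀ s ∈ Finset.Ico a (a + l), s ∉ occ

open Classical in
lemma parkOne_eq_some_iff {m : ℕ} {occ occ' : Finset ℕ} {p l : ℕ} :
    parkOne m occ p l = some occ' ↔
      ∃ a, Fits m occ p l a ∧ (∀ b < a, ¬Fits m occ p l b) ∧
        occ' = occ ∪ Finset.Ico a (a + l) := by
  rw [parkOne]
  split
  case isTrue h =>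
    constructor
    · rintro ⟨⟩
      exact ⟨Nat.find h, Nat.find_spec h, fun b hb => Nat.find_min h hb, rfl⟩
    · rintro ⟨a, ha, hmin, rfl⟩
      rw [(Nat.find_eq_iff h).mpr ⟨ha, hmin⟩]
  case isFalse h =>
    simp only [reduceCtorEq, false_iff, not_exists]
    exact fun a ⟨ha, _⟩ => h ⟨a, ha⟩

lemma parkList_append (m : ℕ) (l₁ l₂ : List (ℕ × ℕ)) (occ : Finset ℕ) :
    parkList m (l₁ ++ l₂) occ = (parkList m l₁ occ).bind (parkList m l₂) := by
  induction l₁ generalizing occ with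
  | nil => simp [parkList]
  | cons c t ih =>
    simp only [List.cons_append, parkList]
    cases parkOne m occ c.1 c.2 <;> simp [ih]

lemma parkList_cons_eq_some_iff {m : ℕ} {c : ℕ × ℕ} {cs : List (ℕ × ℕ)}
    {occ S : Finset ℕ} :
    parkList m (c :: cs) occ = some S ↔
      ∃ occ₁, parkOne m occ c.1 c.2 = some occ₁ ∧ parkList m cs occ₁ = some S := by
  simp [parkList, Option.bind_eq_some_iff]

lemma subset_of_parkList_eq_some_s1 {m : ℕ} {cs : List (ℕ × ℕ)} {occ S : Finset ℕ}
    (h : parkList m cs occ = some S) : occ ⊆ S := by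
  induction cs generalizing occ with
  | nil => simp_all [parkList]
  | cons c t ih =>
    obtain ⟨occ₁, h₁, h⟩ := parkList_cons_eq_some_iff.mp h
    obtain ⟨a, -, -, rfl⟩ := parkOne_eq_some_iff.mp h₁
    exact Finset.subset_union_left.trans (ih h)

lemma fst_add_snd_le_of_parkList_eq_some {m : ℕ} {cs : List (ℕ × ℕ)} {occ S : Finset ℕ}
    (h : parkList m cs occ = some S) {c : ℕ × ℕ} (hc : c ∈ cs) : c.1 + c.2 ≤ m + 1 := by
  induction cs generalizing occ with
  | nil => simp at hc
  | cons d t ih =>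
    obtain ⟨occ₁, h₁, h⟩ := parkList_cons_eq_some_iff.mp h
    rcases List.mem_cons.mp hc with rfl | hc
    · obtain ⟨a, ⟨hpa, hal, -⟩, -⟩ := parkOne_eq_some_iff.mp h₁
      omega
    · exact ih h hc

/-- Renumbering of the spots outside `[j, j + g)` once that block is cut out of the street. -/
def squeeze (j g s : ℕ) : ℕ := if s < j then s else s - g

section Squeeze

variable {j g : ℕ}

lemma squeeze_mem_Ico_iff {a l s : ℕ} (ha : a + l ≤ j ∨ j + g ≤ a)
    (hs : s ∉ Finset.Ico j (j + g)) :
    squeeze j g s ∈ Finset.Ico (squeeze j g a) (squeeze j g a + l) ↔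
      s ∈ Finset.Ico a (a + l) := by
  simp only [Finset.mem_Ico] at hs ⊢
  unfold squeeze
  split_ifs <;> omega

lemma image_squeeze_Ico {a l : ℕ} (ha : a + l ≤ j ∨ j + g ≤ a) :
    (Finset.Ico a (a + l)).image (squeeze j g) =
      Finset.Ico (squeeze j g a) (squeeze j g a + l) := by
  ext s
  simp only [Finset.mem_image, Finset.mem_Ico, squeeze]
  constructor
  · rintro ⟨u, hu, rfl⟩
    split_ifs <;> omega
  · intro hs
    refine ⟨if s < j then s else s + g, ?_, ?_⟩ <;> split_ifs at hs ⊢ <;> omega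

lemma Fits.map_squeeze {m : ℕ} {occ : Finset ℕ} {p l a : ℕ} (h : Fits (m + g) occ p l a)
    (hpj : p ≤ j) (hl : 0 < l) (hjm : j ≤ m + 1) (ha : a + l ≤ j ∨ j + g ≤ a)
    (hocc : ∀ s ∈ occ, s ∉ Finset.Ico j (j + g)) :
    Fits m (occ.image (squeeze j g)) p l (squeeze j g a) := by
  obtain ⟨hpa, hal, hfree⟩ := h
  refine ⟨?_, ?_, ?_⟩
  · unfold squeeze; split_ifs <;> omega
  · unfold squeeze; split_ifs <;> omega
  · simp only [Finset.mem_image, not_exists, not_and]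
    rintro _ hs u hu rfl
    exact hfree u ((squeeze_mem_Ico_iff ha (hocc u hu)).mp hs) hu

lemma Fits.of_map_squeeze {m : ℕ} {occ : Finset ℕ} {p l b : ℕ}
    (h : Fits m (occ.image (squeeze j g)) p l b)
    (hocc : ∀ s ∈ occ, s ∉ Finset.Ico j (j + g)) :
    Fits (m + g) occ p l (if b < j then b else b + g) := by
  obtain ⟨hpb, hbl, hfree⟩ := h
  refine ⟨by split_ifs <;> omega, by split_ifs <;> omega, fun s hs hsocc => ?_⟩
  refine hfree (squeeze j g s) ?_ (Finset.mem_image_of_mem _ hsocc)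
  have := hocc s hsocc
  simp only [Finset.mem_Ico, squeeze] at hs this ⊢
  split_ifs at hs ⊢ <;> omega

lemma parkOne_squeeze {m : ℕ} {occ occ' : Finset ℕ} {p l : ℕ} (hg : 0 < g) (hpj : p ≤ j)
    (hl : 0 < l) (hjm : j ≤ m + 1) (h : parkOne (m + g) occ p l = some occ')
    (hocc' : ∀ s ∈ occ', s ∉ Finset.Ico j (j + g)) :
    parkOne m (occ.image (squeeze j g)) p l = some (occ'.image (squeeze j g)) := by
  obtain ⟨a, ha, hmin, rfl⟩ := parkOne_eq_some_iff.mp h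
  have hocc : ∀ s ∈ occ, s ∉ Finset.Ico j (j + g) :=
    fun s hs => hocc' s (Finset.mem_union_left _ hs)
  -- otherwise `max a j` would lie both in `[a, a + l)` and in `[j, j + g)`
  have hagap : a + l ≤ j ∨ j + g ≤ a := by
    by_contra! hcon
    have := hocc' (max a j) (Finset.mem_union_right _ (Finset.mem_Ico.mpr (by omega)))
    simp only [Finset.mem_Ico] at this
    omega
  rw [parkOne_eq_some_iff, Finset.image_union, image_squeeze_Ico hagap]
  refine ⟨squeeze j g a, ha.map_squeeze hpj hl hjm hagap hocc, fun b hb hfits => ?_, rfl⟩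
  refine hmin _ ?_ (hfits.of_map_squeeze hocc)
  unfold squeeze at hb
  split_ifs at hb ⊢ <;> omega

lemma parkList_squeeze {m : ℕ} (hg : 0 < g) (hjm : j ≤ m + 1) {cs : List (ℕ × ℕ)}
    (hpref : ∀ c ∈ cs, c.1 ≤ j) (hlen : ∀ c ∈ cs, 0 < c.2) {occ S : Finset ℕ}
    (h : parkList (m + g) cs occ = some S) (hS : ∀ s ∈ S, s ∉ Finset.Ico j (j + g)) :
    parkList m cs (occ.image (squeeze j g)) = some (S.image (squeeze j g)) := by
  induction cs generalizing occ with
  | nil => simp_all [parkList]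
  | cons c t ih =>
    obtain ⟨occ₁, h₁, h⟩ := parkList_cons_eq_some_iff.mp h
    have hocc₁ := subset_of_parkList_eq_some_s1 h
    refine parkList_cons_eq_some_iff.mpr ⟨_, ?_, ih (fun d hd => hpref d (.tail _ hd))
      (fun d hd => hlen d (.tail _ hd)) h⟩
    exact parkOne_squeeze hg (hpref c (.head _)) (hlen c (.head _)) hjm h₁
      fun s hs => hS s (hocc₁ hs)

end Squeeze

lemma IsPA.of_append_singleton {y x : List ℕ} {g p : ℕ} (hy : ∀ a ∈ y, 0 < a) (hg : 0 < g)
    (hmax : ∀ a ∈ x, a ≤ p) (h : IsPA (y ++ [g]) (x ++ [p])) : IsPA y x := by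
  obtain ⟨hlen, hbound, hsome⟩ := h
  have hlen : x.length = y.length := by simpa using hlen
  rw [List.sum_append, List.sum_singleton] at hbound hsome
  rw [List.zip_append hlen, parkList_append, Option.isSome_iff_exists] at hsome
  obtain ⟨S, hS⟩ := hsome
  obtain ⟨occ, hocc, hlast⟩ := Option.bind_eq_some_iff.mp hS
  obtain ⟨Slast, hpark, -⟩ := parkList_cons_eq_some_iff.mp hlast
  obtain ⟨j, ⟨hpj, hjm, hfree⟩, -⟩ := parkOne_eq_some_iff.mp hpark
  have hsq : parkList y.sum (x.zip y) ∅ = some (occ.image (squeeze j g)) := by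
    simpa using parkList_squeeze hg (by omega)
      (fun c hc => (hmax c.1 (List.of_mem_zip hc).1).trans hpj)
      (fun c hc => hy c.2 (List.of_mem_zip hc).2) hocc (fun s hs hsg => hfree s hsg hs)
  refine ⟨hlen, fun a ha => ⟨(hbound a (by simp [ha])).1, ?_⟩, by simp [hsq]⟩
  rw [← List.map_fst_zip hlen.le] at ha
  obtain ⟨c, hc, rfl⟩ := List.mem_map.mp ha
  have := fst_add_snd_le_of_parkList_eq_some hsq hc
  have := hy c.2 (List.of_mem_zip hc).2
  omega

theorem stmt1 (y x : List ℕ) (hy : ∀ a ∈ y, 0 < a)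
    (hx : x ∈ PAinv y)
    (k : ℕ) (hk : k < x.length)
    (hmax : ∀ i < x.length, x.getD i 0 ≤ x.getD k 0) :
    x.eraseIdx k ∈ PAinv y.dropLast := by
  intro x' hx'
  have hy_ne : y ≠ [] := by
    rintro rfl
    simp [(hx x (.refl x)).1] at hk
  have hy_split := List.dropLast_append_getLast hy_ne
  have hmax' : ∀ a ∈ x', a ≤ x[k] := by
    intro a ha
    obtain ⟨i, hi, rfl⟩ :=
      List.mem_iff_getElem.mp ((x.eraseIdx_sublist k).subset (hx'.mem_iff.mp ha))
    simpa [List.getD_eq_getElem, hi, hk] using hmax i hi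
  have hperm : (x' ++ [x[k]]).Perm x :=
    (List.perm_append_singleton _ _).trans ((hx'.cons _).trans (List.getElem_cons_eraseIdx_perm hk))
  refine IsPA.of_append_singleton (fun a ha => hy a (List.mem_of_mem_dropLast ha))
    (hy _ (List.getLast_mem hy_ne)) hmax' ?_
  rw [hy_split]
  exact hx _ hperm
end

section
/- Let y = (y_1, y_2) be a pair of positive integers. If y_1 < y_2, then PA^inv_2(y) = {(1,1)}. If y_1 ≥ y_2, then PA^inv_2(y) = {(1,1), (1, y_2+1), (y_2+1, 1)}. -/
lemma parkOne_isSome (m : ℕ) (occ : Finset ℕ) (p l : ℕ) :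
    (parkOne m occ p l).isSome ↔
      ∃ j, p ≤ j ∧ j + l ≤ m + 1 ∧ ∀ k ∈ Finset.Ico j (j + l), k ∉ occ := by
  unfold parkOne
  split
  next h => simpa using h
  next h => simpa using h

lemma parkOne_empty (m p l : ℕ) (h : p + l ≤ m + 1) :
    parkOne m ∅ p l = some (Finset.Ico p (p + l)) := by
  unfold parkOne
  have hex : ∃ j, p ≤ j ∧ j + l ≤ m + 1 ∧ ∀ k ∈ Finset.Ico j (j + l), k ∉ (∅ : Finset ℕ) :=
    ⟨p, le_refl _, h, by simp⟩
  rw [dif_pos hex]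
  have hfind : Nat.find hex = p := by
    rw [Nat.find_eq_iff]
    exact ⟨⟨le_refl _, h, by simp⟩, fun n hn hc => by omega⟩
  rw [hfind]
  simp

lemma park2_isSome (m a y1 b y2 : ℕ) :
    (parkList m [(a, y1), (b, y2)] ∅).isSome ↔
      (a + y1 ≤ m + 1 ∧ ∃ j, b ≤ j ∧ j + y2 ≤ m + 1 ∧
        ∀ k ∈ Finset.Ico j (j + y2), k ∉ Finset.Ico a (a + y1)) := by
  by_cases hc : a + y1 ≤ m + 1
  · rw [show parkList m [(a, y1), (b, y2)] ∅ =
        (parkOne m ∅ a y1).bind (fun occ => (parkOne m occ b y2).bind (parkList m [])) from rfl,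
      parkOne_empty m a y1 hc]
    simp only [Option.bind_eq_bind, Option.bind_some]
    constructor
    · intro h
      refine ⟨hc, ?_⟩
      rw [← parkOne_isSome]
      cases hp : parkOne m (Finset.Ico a (a + y1)) b y2 with
      | none => rw [hp] at h; simp at h
      | some o => simp
    · rintro ⟨-, hex⟩
      rw [← parkOne_isSome] at hex
      cases hp : parkOne m (Finset.Ico a (a + y1)) b y2 with
      | none => rw [hp] at hex; simp at hex
      | some o => simp [parkList]
  · have : parkOne m ∅ a y1 = none := by
      unfold parkOne
      rw [dif_neg]
      rintro ⟨j, hj1, hj2, -⟩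
      omega
    rw [show parkList m [(a, y1), (b, y2)] ∅ =
        (parkOne m ∅ a y1).bind (fun occ => (parkOne m occ b y2).bind (parkList m [])) from rfl,
      this]
    simp [hc]

lemma isPA_pair (y1 y2 a b : ℕ) (h1 : 0 < y1) (h2 : 0 < y2) :
    IsPA [y1, y2] [a, b] ↔
      (1 ≤ a ∧ a ≤ y1 + y2) ∧ (1 ≤ b ∧ b ≤ y1 + y2) ∧ a ≤ y2 + 1 ∧
        (b + y2 ≤ a ∨ (a = 1 ∧ b ≤ y1 + 1)) := by
  unfold IsPA
  have hsum : List.sum [y1, y2] = y1 + y2 := by simp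
  rw [hsum]
  have hzip : List.zip [a, b] [y1, y2] = [(a, y1), (b, y2)] := rfl
  rw [hzip, park2_isSome]
  constructor
  · rintro ⟨-, hmem, hpark⟩
    have ha := hmem a (by simp)
    have hb := hmem b (by simp)
    obtain ⟨hc, j, hj1, hj2, hj3⟩ := hpark
    refine ⟨ha, hb, by omega, ?_⟩
    -- disjointness of Ico j (j+y2) and Ico a (a+y1)
    by_cases hd : j + y2 ≤ a
    · left; omega
    · right
      have haj : a + y1 ≤ j := by
        by_contra hne
        -- then intervals overlap: max a j is in both
        have : max a j ∈ Finset.Ico j (j + y2) := by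
          simp [Finset.mem_Ico]; omega
        exact hj3 _ this (by simp [Finset.mem_Ico]; omega)
      constructor
      · omega
      · omega
  · rintro ⟨ha, hb, hc, hcase⟩
    refine ⟨rfl, ?_, by omega, ?_⟩
    · intro x hx
      simp at hx
      rcases hx with h | h <;> subst h <;> omega
    · rcases hcase with h | ⟨ha1, hb1⟩
      · exact ⟨b, le_refl _, by omega, fun k hk hk' => by
          simp [Finset.mem_Ico] at hk hk'; omega⟩
      · exact ⟨y1 + 1, by omega, by omega, fun k hk hk' => by
          simp [Finset.mem_Ico] at hk hk'; omega⟩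

lemma perm_pair {a b c d : ℕ} (h : List.Perm [c, d] [a, b]) :
    (c = a ∧ d = b) ∨ (c = b ∧ d = a) := by
  have hc : c ∈ [a, b] := h.mem_iff.mp (by simp)
  simp at hc
  rcases hc with rfl | rfl
  · left
    have := h.cons_inv
    have : d = b := by
      have hd : d ∈ [b] := this.mem_iff.mp (by simp)
      simpa using hd
    exact ⟨rfl, this⟩
  · right
    have h' : List.Perm [c, d] [c, a] := h.trans (List.Perm.swap c a [])
    have := h'.cons_inv
    have : d = a := by
      have hd : d ∈ [a] := this.mem_iff.mp (by simp)
      simpa using hd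
    exact ⟨rfl, this⟩

lemma mem_PAinv_pair (y1 y2 a b : ℕ) :
    [a, b] ∈ PAinv [y1, y2] ↔ IsPA [y1, y2] [a, b] ∧ IsPA [y1, y2] [b, a] := by
  constructor
  · intro h
    exact ⟨h _ (List.Perm.refl _), h _ (List.Perm.swap a b [])⟩
  · rintro ⟨hab, hba⟩ x' hx'
    obtain ⟨c, d, rfl⟩ := List.length_eq_two.mp (by simpa using hx'.length_eq)
    rcases perm_pair hx' with ⟨rfl, rfl⟩ | ⟨rfl, rfl⟩
    · exact hab
    · exact hba

lemma PAinv_pair_shape (y1 y2 : ℕ) {x : List ℕ} (h : x ∈ PAinv [y1, y2]) :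
    ∃ a b, x = [a, b] := by
  have := (h x (List.Perm.refl x)).1
  simp at this
  exact List.length_eq_two.mp this

theorem stmt13 (y1 y2 : ℕ) (h1 : 0 < y1) (h2 : 0 < y2) :
    (y1 < y2 → PAinv [y1, y2] = {[1, 1]}) ∧
    (y2 ≤ y1 → PAinv [y1, y2] = {[1, 1], [1, y2 + 1], [y2 + 1, 1]}) := by
  have key : ∀ a b, [a, b] ∈ PAinv [y1, y2] ↔
      ((a = 1 ∧ b = 1) ∨ (y2 ≤ y1 ∧ ((a = 1 ∧ b = y2 + 1) ∨ (a = y2 + 1 ∧ b = 1)))) := by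
    intro a b
    rw [mem_PAinv_pair, isPA_pair y1 y2 a b h1 h2, isPA_pair y1 y2 b a h1 h2]
    constructor
    · rintro ⟨⟨ha, hb, hc, hcase⟩, ⟨-, -, hc', hcase'⟩⟩
      rcases hcase with h | ⟨ha1, hb1⟩
      · rcases hcase' with h' | ⟨hb1', ha1'⟩ <;> [omega; (right; omega)]
      · rcases hcase' with h' | ⟨hb1', ha1'⟩
        · right; omega
        · left; omega
    · rintro (⟨rfl, rfl⟩ | ⟨hle, (⟨rfl, rfl⟩ | ⟨rfl, rfl⟩)⟩) <;>
        refine ⟨⟨by omega, by omega, by omega, ?_⟩, ⟨by omega, by omega, by omega, ?_⟩⟩ <;>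
        omega
  constructor
  · intro hlt
    ext x
    constructor
    · intro hx
      obtain ⟨a, b, rfl⟩ := PAinv_pair_shape y1 y2 hx
      rw [key] at hx
      have : a = 1 ∧ b = 1 := by omega
      simp [this.1, this.2]
    · rintro rfl
      rw [key]; left; exact ⟨rfl, rfl⟩
  · intro hle
    ext x
    constructor
    · intro hx
      obtain ⟨a, b, rfl⟩ := PAinv_pair_shape y1 y2 hx
      rw [key] at hx
      rcases hx with ⟨rfl, rfl⟩ | ⟨-, (⟨rfl, rfl⟩ | ⟨rfl, rfl⟩)⟩
      · left; rfl
      · right; left; rfl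
      · right; right; rfl
    · intro hx
      rcases hx with rfl | rfl | rfl <;> rw [key]
      · left; exact ⟨rfl, rfl⟩
      · right; exact ⟨hle, Or.inl ⟨rfl, rfl⟩⟩
      · right; exact ⟨hle, Or.inr ⟨rfl, rfl⟩⟩
end
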